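/- Let Z = (a_1,…,a_{m+1}; b_1,…,b_m) be a special symbol of defect 1 and Z' = (c_1,…,c_{m'}; d_1,…,d_{m'}) a special symbol of defect 0 with m' = m or m' = m+1. Suppose both Z and Z' are regular and D_{Z,Z'} is one-to-one. Let Z_(m) := (2m, 2m−2, …, 0; 2m−1, 2m−3, …, 1) and Z'_(m') := (2m'−1, 2m'−3, …, 1; 2m'−2, 2m'−4, …, 0), which are regular special symbols of defects 1 and 0 respectively. Define bijections h (on the entries of Z) by a_i ↦ 2m+2−2i, b_i ↦ 2m+1−2i, and h' (on the entries of Z') by c_i ↦ 2m'+1−2i, d_i ↦ 2m'−2i, and the induced bijections h̄: S̄_Z → S̄_{Z_(m)}, Λ_M ↦ Λ_{h(M)}, and h̄': S̄_{Z'} → S̄_{Z'_(m')}, Λ_N ↦ Λ_{h'(N)}. Then for all Λ ∈ S̄_Z and Λ' ∈ S̄_{Z'}, (Λ,Λ') ∈ B̄⁺_{Z,Z'} if and only if (h̄(Λ), h̄'(Λ')) ∈ B̄⁺_{Z_(m),Z'_(m')}. -/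

import Mathlib

open scoped symmDiff

/-- A symbol: a pair of finsets of naturals (its two rows, each read in
strictly decreasing order). -/
abbrev Symb :=  Finset ℕ × Finset ℕ

/-- The strictly decreasing enumeration of a finset of naturals. -/
def rowList (s : Finset ℕ) : List ℕ := (s.sort (· ≤ ·)).reverse

/-- The `i`-th entry (0-based) of the strictly decreasing enumeration of `s`. -/
def ent (s : Finset ℕ) (i : ℕ) : Option ℕ := (rowList s)[i]?

/-- Impose a relation on two optional entries whenever both exist. -/
def oRel (r : ℕ → ℕ → Prop) : Option ℕ → Option ℕ → Prop
  | some x, some y => r x y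
  | _, _ => True

/-- `Z` is a special symbol of defect 1 and size `(m+1, m)`. -/
def IsSpecial1 (Z : Symb) (m : ℕ) : Prop :=
  Z.1.card = m + 1 ∧ Z.2.card = m ∧
  (∀ i, oRel (· ≥ ·) (ent Z.1 i) (ent Z.2 i)) ∧
  (∀ i, oRel (· ≥ ·) (ent Z.2 i) (ent Z.1 (i + 1)))

/-- `Z'` is a special symbol of defect 0 and size `(m', m')`. -/
def IsSpecial0 (Z : Symb) (m' : ℕ) : Prop :=
  Z.1.card = m' ∧ Z.2.card = m' ∧
  (∀ i, oRel (· ≥ ·) (ent Z.1 i) (ent Z.2 i)) ∧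
  (∀ i, oRel (· ≥ ·) (ent Z.2 i) (ent Z.1 (i + 1)))

/-- `Z_I`: the entries of `Z` lying in exactly one row (row remembered). -/
def ZI (Z : Symb) : Symb := (Z.1 \ Z.2, Z.2 \ Z.1)

/-- `M` is a subset of `Z_I`. -/
def SubZI (M Z : Symb) : Prop := M.1 ⊆ Z.1 \ Z.2 ∧ M.2 ⊆ Z.2 \ Z.1

/-- `Z` is regular: no degenerate entries. -/
def Regular (Z : Symb) : Prop := Disjoint Z.1 Z.2

/-- `Λ_M`: exchange the rows of the entries of `M`. -/
def lam (Z M : Symb) : Symb := ((Z.1 \ M.1) ∪ M.2, (Z.2 \ M.2) ∪ M.1)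

/-- `S̄_Z = {Λ_M : M ⊆ Z_I}`. -/
def Sbar (Z : Symb) : Set Symb := {Λ | ∃ M, SubZI M Z ∧ Λ = lam Z M}

/-- Size and inequality conditions of `B̄⁺_{Z,Z'}` in the case `m' = m`. -/
def Bm (Λ Λ' : Symb) : Prop :=
  Λ'.1.card = Λ.2.card ∧ Λ'.2.card + 1 = Λ.1.card ∧
  (∀ i, oRel (· > ·) (ent Λ.1 i) (ent Λ'.2 i)) ∧
  (∀ i, oRel (· ≥ ·) (ent Λ'.2 i) (ent Λ.1 (i + 1))) ∧
  (∀ i, oRel (· > ·) (ent Λ.2 i) (ent Λ'.1 (i + 1))) ∧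
  (∀ i, oRel (· ≥ ·) (ent Λ'.1 i) (ent Λ.2 i))

/-- Size and inequality conditions of `B̄⁺_{Z,Z'}` in the case `m' = m + 1`. -/
def Bm1 (Λ Λ' : Symb) : Prop :=
  Λ'.1.card = Λ.2.card + 1 ∧ Λ'.2.card = Λ.1.card ∧
  (∀ i, oRel (· ≥ ·) (ent Λ.1 i) (ent Λ'.2 i)) ∧
  (∀ i, oRel (· > ·) (ent Λ'.2 i) (ent Λ.1 (i + 1))) ∧
  (∀ i, oRel (· ≥ ·) (ent Λ.2 i) (ent Λ'.1 (i + 1))) ∧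
  (∀ i, oRel (· > ·) (ent Λ'.1 i) (ent Λ.2 i))

/-- The relation `B̄⁺_{Z,Z'}`. -/
def BbarPlus (Z Z' : Symb) (m m' : ℕ) (Λ Λ' : Symb) : Prop :=
  Λ ∈ Sbar Z ∧ Λ' ∈ Sbar Z' ∧
  ((m' = m ∧ Bm Λ Λ') ∨ (m' = m + 1 ∧ Bm1 Λ Λ'))

/-- The relation `D_{Z,Z'}`. -/
def DRel (Z Z' : Symb) (m m' : ℕ) (A A' : Symb) : Prop :=
  BbarPlus Z Z' m m' A A' ∧
  A.1.card = m + 1 ∧ A.2.card = m ∧ A'.1.card = m' ∧ A'.2.card = m'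

/-- `{c, d}` is a consecutive pair in `Z_I`. -/
def ConsecPair (Z : Symb) (c d : ℕ) : Prop :=
  c ∈ Z.1 \ Z.2 ∧ d ∈ Z.2 \ Z.1 ∧
  ∀ x ∈ (Z.1 \ Z.2) ∪ (Z.2 \ Z.1), ¬(min c d < x ∧ x < max c d)


/-- `posImage s t u shift`: the set of entries of `t` whose (0-based) position in the
decreasing enumeration of `t` is `i + shift` for some position `i` in `s` occupied by
an element of `u`. -/
noncomputable def posImage (s t u : Finset ℕ) (shift : ℕ) : Finset ℕ := by
  classical
  exact t.filter fun y => ∃ i x, ent s i = some x ∧ x ∈ u ∧ ent t (i + shift) = some y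

/-- `D_{Z,Z'}` is one-to-one: it is nonempty, `D_Z = {Z'}` and `D_{Z'} = {Z}`. -/
def OneToOne (Z Z' : Symb) (m m' : ℕ) : Prop :=
  (∃ A A' : Symb, DRel Z Z' m m' A A') ∧
  {Λ' | DRel Z Z' m m' Z Λ'} = {Z'} ∧
  {Λ | DRel Z Z' m m' Λ Z'} = {Z}

/-- The regular special symbol `Z_(m) = (2m, 2m-2, …, 0; 2m-1, 2m-3, …, 1)`. -/
def Zreg1 (m : ℕ) : Symb :=
  ((Finset.range (m + 1)).image fun j => 2 * j, (Finset.range m).image fun j => 2 * j + 1)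

/-- The regular special symbol `Z'_(m') = (2m'-1, 2m'-3, …, 1; 2m'-2, 2m'-4, …, 0)`. -/
def Zreg0 (m' : ℕ) : Symb :=
  ((Finset.range m').image fun j => 2 * j + 1, (Finset.range m').image fun j => 2 * j)


/-!
A regular special symbol `X` is an alternating sequence `x1_0 > x2_0 > x1_1 > x2_1 > ⋯` read
across its two rows, and the bijections `h`, `h'` send the entry of index `k` in this merged
sequence to `u - k`. Being strictly monotone, they preserve every comparison inside `Z` or
inside `Z'`; what has to be shown is that they also preserve the comparisons between an entry
of `Z` and an entry of `Z'` that occur in `B̄⁺`.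

Write `(X, Y) = (Z, Z')` if `m' = m` and `(X, Y) = (Z', Z)` if `m' = m + 1`; in both cases
`B̄⁺` is the same interlacing condition `Bm X Y`. One-to-oneness of `D_{Z,Z'}` forces `X` to
dominate `Y` entrywise: at the last index where this fails, exchanging two entries of `X` or of
`Y` that are adjacent in the merged sequence gives a second partner in `D_{Z,Z'}`. Domination
and `Bm X Y` together fix the order of all entries of `X` and `Y` to be
`x1_0 > y1_0 ≥ x2_0 > y2_0 ≥ x1_1 > ⋯`, which is exactly the order of the standard symbols.
-/

/-! ### Entries of a row -/

lemma rowList_pairwise (s : Finset ℕ) : (rowList s).Pairwise (· > ·) := by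
  rw [rowList, List.pairwise_reverse]
  exact s.sortedLT_sort.pairwise

lemma mem_rowList {s : Finset ℕ} {x : ℕ} : x ∈ rowList s ↔ x ∈ s := by
  simp [rowList]

lemma ent_mem {s : Finset ℕ} {i x : ℕ} (h : ent s i = some x) : x ∈ s :=
  mem_rowList.mp (List.mem_of_getElem? h)

lemma ent_eq_none_iff {s : Finset ℕ} {i : ℕ} : ent s i = none ↔ s.card ≤ i := by
  simp [ent, rowList]

lemma ent_lt_card {s : Finset ℕ} {i x : ℕ} (h : ent s i = some x) : i < s.card :=
  not_le.mp fun hi => by simp [ent_eq_none_iff.mpr hi] at h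

lemma exists_ent_of_lt {s : Finset ℕ} {i : ℕ} (h : i < s.card) : ∃ x, ent s i = some x :=
  Option.ne_none_iff_exists'.mp (mt ent_eq_none_iff.mp (not_le.mpr h))

lemma mem_iff_exists_ent {s : Finset ℕ} {x : ℕ} : x ∈ s ↔ ∃ i, ent s i = some x := by
  rw [← mem_rowList, List.mem_iff_getElem?]
  rfl

lemma ent_lt_ent {s : Finset ℕ} {i j x y : ℕ} (hij : i < j)
    (hi : ent s i = some x) (hj : ent s j = some y) : y < x := by
  obtain ⟨hi', rfl⟩ := List.getElem?_eq_some_iff.mp hi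
  obtain ⟨hj', rfl⟩ := List.getElem?_eq_some_iff.mp hj
  exact List.pairwise_iff_getElem.mp (rowList_pairwise s) i j hi' hj' hij

lemma ent_le_ent {s : Finset ℕ} {i j x y : ℕ} (hij : i ≤ j)
    (hi : ent s i = some x) (hj : ent s j = some y) : y ≤ x := by
  rcases hij.lt_or_eq with hij | rfl
  · exact (ent_lt_ent hij hi hj).le
  · exact (Option.some_injective _ (hi.symm.trans hj)).ge

lemma index_eq_of_ent_eq {s : Finset ℕ} {i j x : ℕ} (hi : ent s i = some x)
    (hj : ent s j = some x) : i = j := by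
  by_contra hij
  rcases Nat.lt_or_gt_of_ne hij with h | h
  · exact (ent_lt_ent h hi hj).false
  · exact (ent_lt_ent h hj hi).false

lemma Finset.eq_of_forall_ent_eq {s t : Finset ℕ} (h : ∀ i, ent s i = ent t i) : s = t := by
  ext x
  simp only [mem_iff_exists_ent, h]

lemma ent_image {s : Finset ℕ} {f : ℕ → ℕ} (hf : StrictMonoOn f ↑s) (i : ℕ) :
    ent (s.image f) i = (ent s i).map f := by
  have hsort : (s.image f).sort (· ≤ ·) = (s.sort (· ≤ ·)).map f := by
    rw [Finset.sort, Finset.image_val_of_injOn hf.injOn, Finset.sort,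
      Multiset.map_sort _ _ _ _ fun a ha b hb => (hf.le_iff_le ha hb).symm]
  simp [ent, rowList, hsort, ← List.map_reverse]

lemma ent_range_image {n i : ℕ} {f : ℕ → ℕ} (hf : StrictMono f) :
    ent ((Finset.range n).image f) i = if i < n then some (f (n - 1 - i)) else none := by
  rw [ent_image (hf.strictMonoOn _), ent, rowList, Finset.sort_range]
  split_ifs with hi
  · simp [hi]
  · simp [not_lt.mp hi]

def pos (s : Finset ℕ) (x : ℕ) : ℕ := (rowList s).idxOf x

lemma pos_eq {s : Finset ℕ} {p x : ℕ} (h : ent s p = some x) : pos s x = p := by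
  have hx : x ∈ rowList s := mem_rowList.mpr (ent_mem h)
  refine index_eq_of_ent_eq ?_ h
  rw [ent, pos, List.getElem?_eq_getElem (List.idxOf_lt_length_iff.mpr hx)]
  simp [List.getElem_idxOf]

lemma ent_sdiff_union_singleton {s : Finset ℕ} {p x y : ℕ} (hx : ent s p = some x)
    (hy : y ∉ s) (hgap : ∀ z ∈ s, z ≠ x → (x < z ↔ y < z)) :
    ent (s \ {x} ∪ {y}) = Function.update (ent s) p (some y) := by
  set f : ℕ → ℕ := fun z => if z = x then y else z with hf_def
  have hf : StrictMonoOn f ↑s := by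
    intro a ha b hb hab
    simp only [hf_def]
    split_ifs with hax hbx hbx
    · exact absurd (hax.trans hbx.symm) hab.ne
    · subst hax
      exact (hgap b hb hbx).mp hab
    · subst hbx
      refine lt_of_le_of_ne (not_lt.mp fun hya => ?_) fun hay => hy (hay ▸ ha)
      exact hab.not_gt ((hgap a ha hax).mpr hya)
    · exact hab
  have himg : s \ {x} ∪ {y} = s.image f := by
    ext z
    simp only [Finset.mem_union, Finset.mem_sdiff, Finset.mem_singleton, Finset.mem_image,
      hf_def]
    constructor
    · rintro (⟨hz, hzx⟩ | rfl)
      · exact ⟨z, hz, if_neg hzx⟩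
      · exact ⟨x, ent_mem hx, if_pos rfl⟩
    · rintro ⟨w, hw, rfl⟩
      split_ifs with hwx
      · exact .inr rfl
      · exact .inl ⟨hw, hwx⟩
  funext j
  rw [himg, ent_image hf]
  rcases eq_or_ne j p with rfl | hj
  · simp [hx, hf_def]
  · rw [Function.update_of_ne hj]
    rcases hz : ent s j with _ | z
    · rfl
    · have hzx : z ≠ x := fun h => hj (index_eq_of_ent_eq (h ▸ hz) hx)
      simp [hf_def, hzx]

lemma card_sdiff_union_singleton {s : Finset ℕ} {x y : ℕ} (hx : x ∈ s) (hy : y ∉ s) :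
    (s \ {x} ∪ {y}).card = s.card := by
  rw [Finset.card_union_of_disjoint (by simp [hy]), Finset.card_sdiff_of_subset (by simpa),
    Finset.card_singleton, Finset.card_singleton]
  have := Finset.card_pos.mpr ⟨x, hx⟩
  omega

/-! ### Optional comparisons -/

section oRel

variable {r r' : ℕ → ℕ → Prop}

@[simp] lemma oRel_none_left (o : Option ℕ) : oRel r none o := by cases o <;> trivial

@[simp] lemma oRel_none_right (o : Option ℕ) : oRel r o none := by cases o <;> trivial

@[simp] lemma oRel_some_some {x y : ℕ} : oRel r (some x) (some y) ↔ r x y := Iff.rfl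

lemma oRel_of_forall {o o' : Option ℕ} (h : ∀ x y, o = some x → o' = some y → r x y) :
    oRel r o o' := by
  cases o <;> cases o' <;> simp_all

lemma oRel_mono {o o' : Option ℕ} (h : oRel r o o') (hrr : ∀ x y, r x y → r' x y) :
    oRel r' o o' :=
  oRel_of_forall fun x y hx hy => by subst hx hy; exact hrr x y h

lemma oRel_trans {r₁ r₂ : ℕ → ℕ → Prop} {o₁ o₂ o₃ : Option ℕ}
    (htr : ∀ a b c, r₁ a b → r₂ b c → r a c) (h₁ : oRel r₁ o₁ o₂) (h₂ : oRel r₂ o₂ o₃)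
    (hex : ∀ a c, o₁ = some a → o₃ = some c → ∃ b, o₂ = some b) : oRel r o₁ o₃ :=
  oRel_of_forall fun a c ha hc => by
    obtain ⟨b, hb⟩ := hex a c ha hc
    subst ha hb hc
    exact htr a b c h₁ h₂

lemma oRel_trans_some {r₁ r₂ : ℕ → ℕ → Prop} {o₁ o₃ : Option ℕ} {b : ℕ}
    (htr : ∀ a b c, r₁ a b → r₂ b c → r a c) (h₁ : oRel r₁ o₁ (some b))
    (h₂ : oRel r₂ (some b) o₃) : oRel r o₁ o₃ :=
  oRel_trans htr h₁ h₂ fun _ _ _ _ => ⟨b, rfl⟩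

lemma oRel_gt_of_ge {A B : Finset ℕ} {i j : ℕ} (hd : Disjoint A B)
    (h : oRel (· ≥ ·) (ent A i) (ent B j)) : oRel (· > ·) (ent A i) (ent B j) :=
  oRel_of_forall fun x y hx hy => by
    rw [hx, hy] at h
    exact lt_of_le_of_ne h fun hxy =>
      Finset.disjoint_left.mp hd (ent_mem hx) (hxy ▸ ent_mem hy)

lemma rel_of_add_le (hr : ∀ x y z, z ≤ y → r x y → r x z) {A B : Finset ℕ} {k : ℕ}
    (h : ∀ i, oRel r (ent A i) (ent B (i + k))) {p q x y : ℕ}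
    (hx : ent A p = some x) (hy : ent B q = some y) (hpq : p + k ≤ q) : r x y := by
  obtain ⟨w, hw⟩ := exists_ent_of_lt (hpq.trans_lt (ent_lt_card hy))
  have hp := h p
  rw [hx, hw] at hp
  exact hr x w y (ent_le_ent hpq hw hy) hp

lemma lt_iff_le_of_interleave {A B : Finset ℕ}
    (h₁ : ∀ i, oRel (· > ·) (ent A i) (ent B i))
    (h₂ : ∀ i, oRel (· ≥ ·) (ent B i) (ent A (i + 1))) {p q x y : ℕ}
    (hx : ent A p = some x) (hy : ent B q = some y) : y < x ↔ p ≤ q := by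
  refine ⟨fun hyx => not_lt.mp fun hqp => ?_, fun hpq => ?_⟩
  · exact hyx.not_ge (rel_of_add_le (r := (· ≥ ·)) (fun _ _ _ => le_trans) h₂ hy hx hqp)
  · exact rel_of_add_le (r := (· > ·)) (k := 0) (fun _ _ _ => lt_of_le_of_lt) h₁ hx hy hpq

lemma le_iff_le_of_interleave {A B : Finset ℕ}
    (h₁ : ∀ i, oRel (· ≥ ·) (ent A i) (ent B i))
    (h₂ : ∀ i, oRel (· > ·) (ent B i) (ent A (i + 1))) {p q x y : ℕ}
    (hx : ent A p = some x) (hy : ent B q = some y) : y ≤ x ↔ p ≤ q := by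
  refine ⟨fun hyx => not_lt.mp fun hqp => ?_, fun hpq => ?_⟩
  · exact hyx.not_gt (rel_of_add_le (r := (· > ·)) (fun _ _ _ => lt_of_le_of_lt) h₂ hy hx hqp)
  · exact rel_of_add_le (r := (· ≥ ·)) (k := 0) (fun _ _ _ => le_trans) h₁ hx hy hpq

end oRel

namespace Symb

/-! ### Interlaced symbols and their merged sequence -/

structure Interlaced (X : Symb) : Prop where
  card_snd_le : X.2.card ≤ X.1.card
  card_fst_le : X.1.card ≤ X.2.card + 1
  fst_gt_snd : ∀ i, oRel (· > ·) (ent X.1 i) (ent X.2 i)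
  snd_gt_fst : ∀ i, oRel (· > ·) (ent X.2 i) (ent X.1 (i + 1))

lemma Interlaced.of_regular {X : Symb} (h₁ : X.2.card ≤ X.1.card)
    (h₂ : X.1.card ≤ X.2.card + 1) (hge₁ : ∀ i, oRel (· ≥ ·) (ent X.1 i) (ent X.2 i))
    (hge₂ : ∀ i, oRel (· ≥ ·) (ent X.2 i) (ent X.1 (i + 1))) (hreg : Regular X) :
    Interlaced X :=
  ⟨h₁, h₂, fun i => oRel_gt_of_ge hreg (hge₁ i), fun i => oRel_gt_of_ge hreg.symm (hge₂ i)⟩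

lemma _root_.IsSpecial1.interlaced {Z : Symb} {m : ℕ} (h : IsSpecial1 Z m)
    (hreg : Regular Z) : Interlaced Z :=
  .of_regular (by rw [h.1, h.2.1]; omega) (by rw [h.1, h.2.1]) h.2.2.1 h.2.2.2 hreg

lemma _root_.IsSpecial0.interlaced {Z : Symb} {m : ℕ} (h : IsSpecial0 Z m)
    (hreg : Regular Z) : Interlaced Z :=
  .of_regular (by rw [h.1, h.2.1]) (by rw [h.1, h.2.1]; omega) h.2.2.1 h.2.2.2 hreg

/-- For interlaced `X`, the index of `x` in the merged sequence `x1_0 > x2_0 > x1_1 > ⋯`. -/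
def rank (X : Symb) (x : ℕ) : ℕ := if x ∈ X.1 then 2 * pos X.1 x else 2 * pos X.2 x + 1

lemma rank_of_ent_fst {X : Symb} {p x : ℕ} (h : ent X.1 p = some x) : rank X x = 2 * p := by
  rw [rank, if_pos (ent_mem h), pos_eq h]

namespace Interlaced

variable {X : Symb}

lemma snd_ge_fst (hX : Interlaced X) (i : ℕ) : oRel (· ≥ ·) (ent X.2 i) (ent X.1 (i + 1)) :=
  oRel_mono (hX.snd_gt_fst i) fun _ _ => le_of_lt

lemma exists_ent_fst (hX : Interlaced X) {i y : ℕ} (h : ent X.2 i = some y) :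
    ∃ x, ent X.1 i = some x :=
  exists_ent_of_lt ((ent_lt_card h).trans_le hX.card_snd_le)

lemma exists_ent_snd (hX : Interlaced X) {i x : ℕ} (h : ent X.1 (i + 1) = some x) :
    ∃ y, ent X.2 i = some y :=
  exists_ent_of_lt (by have := ent_lt_card h; have := hX.card_fst_le; omega)

lemma disjoint (hX : Interlaced X) : Disjoint X.1 X.2 := by
  refine Finset.disjoint_left.mpr fun x hx₁ hx₂ => ?_
  obtain ⟨p, hp⟩ := mem_iff_exists_ent.mp hx₁
  obtain ⟨q, hq⟩ := mem_iff_exists_ent.mp hx₂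
  have hqp : q < p := not_le.mp fun h =>
    (lt_irrefl x) ((lt_iff_le_of_interleave hX.fst_gt_snd hX.snd_ge_fst hp hq).mpr h)
  exact lt_irrefl x (rel_of_add_le (r := (· > ·)) (fun _ _ _ => lt_of_le_of_lt)
    hX.snd_gt_fst hq hp hqp)

lemma rank_of_ent_snd (hX : Interlaced X) {q x : ℕ} (h : ent X.2 q = some x) :
    rank X x = 2 * q + 1 := by
  rw [rank, if_neg (Finset.disjoint_right.mp hX.disjoint (ent_mem h)), pos_eq h]

lemma exists_ent_rank (hX : Interlaced X) {x : ℕ} (hx : x ∈ X.1 ∪ X.2) :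
    ∃ p, (ent X.1 p = some x ∧ rank X x = 2 * p) ∨
      (ent X.2 p = some x ∧ rank X x = 2 * p + 1) := by
  rcases Finset.mem_union.mp hx with hx | hx
  · obtain ⟨p, hp⟩ := mem_iff_exists_ent.mp hx
    exact ⟨p, .inl ⟨hp, rank_of_ent_fst hp⟩⟩
  · obtain ⟨p, hp⟩ := mem_iff_exists_ent.mp hx
    exact ⟨p, .inr ⟨hp, hX.rank_of_ent_snd hp⟩⟩

lemma rank_lt (hX : Interlaced X) {x : ℕ} (hx : x ∈ X.1 ∪ X.2) :
    rank X x < X.1.card + X.2.card := by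
  have := hX.card_snd_le
  have := hX.card_fst_le
  obtain ⟨p, ⟨hp, hr⟩ | ⟨hp, hr⟩⟩ := hX.exists_ent_rank hx <;>
    · have := ent_lt_card hp
      omega

lemma le_of_rank_le (hX : Interlaced X) {x y : ℕ} (hx : x ∈ X.1 ∪ X.2)
    (hy : y ∈ X.1 ∪ X.2) (h : rank X x ≤ rank X y) : y ≤ x := by
  obtain ⟨p, ⟨hp, hrx⟩ | ⟨hp, hrx⟩⟩ := hX.exists_ent_rank hx <;>
    obtain ⟨q, ⟨hq, hry⟩ | ⟨hq, hry⟩⟩ := hX.exists_ent_rank hy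
  · exact ent_le_ent (by omega) hp hq
  · exact ((lt_iff_le_of_interleave hX.fst_gt_snd hX.snd_ge_fst hp hq).mpr (by omega)).le
  · exact (rel_of_add_le (r := (· > ·)) (fun _ _ _ => lt_of_le_of_lt) hX.snd_gt_fst hp hq
      (by omega)).le
  · exact ent_le_ent (by omega) hp hq

lemma rank_lt_rank_iff (hX : Interlaced X) {x y : ℕ} (hx : x ∈ X.1 ∪ X.2)
    (hy : y ∈ X.1 ∪ X.2) : rank X x < rank X y ↔ y < x := by
  refine ⟨fun h => (hX.le_of_rank_le hx hy h.le).lt_of_ne ?_, fun h => not_le.mp fun h' =>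
    h.not_ge (hX.le_of_rank_le hy hx h')⟩
  rintro rfl
  exact lt_irrefl _ h

lemma lt_iff_lt_of_rank_adj (hX : Interlaced X) {x y z : ℕ} (hx : x ∈ X.1 ∪ X.2)
    (hy : y ∈ X.1 ∪ X.2) (hz : z ∈ X.1 ∪ X.2) (hzx : z ≠ x) (hzy : z ≠ y)
    (hadj : rank X x = rank X y + 1 ∨ rank X y = rank X x + 1) : x < z ↔ y < z := by
  have hinj : ∀ w ∈ X.1 ∪ X.2, rank X z = rank X w → z = w := fun w hw h =>
    le_antisymm (hX.le_of_rank_le hw hz h.ge) (hX.le_of_rank_le hz hw h.le)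
  have := mt (hinj x hx) hzx
  have := mt (hinj y hy) hzy
  rw [← hX.rank_lt_rank_iff hz hx, ← hX.rank_lt_rank_iff hz hy]
  omega

lemma ent_lam_swap (hX : Interlaced X) {p q x y : ℕ} (hx : ent X.1 p = some x)
    (hy : ent X.2 q = some y) (hpq : q = p ∨ q + 1 = p) :
    ent (lam X ({x}, {y})).1 = Function.update (ent X.1) p (some y) ∧
      ent (lam X ({x}, {y})).2 = Function.update (ent X.2) q (some x) := by
  have hx' : x ∈ X.1 ∪ X.2 := Finset.mem_union_left _ (ent_mem hx)
  have hy' : y ∈ X.1 ∪ X.2 := Finset.mem_union_right _ (ent_mem hy)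
  have hadj : rank X x = rank X y + 1 ∨ rank X y = rank X x + 1 := by
    rw [rank_of_ent_fst hx, hX.rank_of_ent_snd hy]
    omega
  refine ⟨ent_sdiff_union_singleton hx (Finset.disjoint_right.mp hX.disjoint (ent_mem hy))
      fun z hz hzx => ?_, ent_sdiff_union_singleton hy
      (Finset.disjoint_left.mp hX.disjoint (ent_mem hx)) fun z hz hzy => ?_⟩
  · exact hX.lt_iff_lt_of_rank_adj hx' hy' (Finset.mem_union_left _ hz) hzx
      (fun h => Finset.disjoint_left.mp hX.disjoint hz (h ▸ ent_mem hy)) hadj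
  · exact hX.lt_iff_lt_of_rank_adj hy' hx' (Finset.mem_union_right _ hz) hzy
      (fun h => Finset.disjoint_right.mp hX.disjoint hz (h ▸ ent_mem hx)) hadj.symm

end Interlaced

lemma card_lam_swap {X : Symb} {x y : ℕ} (hd : Disjoint X.1 X.2) (hx : x ∈ X.1)
    (hy : y ∈ X.2) :
    (lam X ({x}, {y})).1.card = X.1.card ∧ (lam X ({x}, {y})).2.card = X.2.card :=
  ⟨card_sdiff_union_singleton hx (Finset.disjoint_right.mp hd hy),
    card_sdiff_union_singleton hy (Finset.disjoint_left.mp hd hx)⟩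

/-! ### Relabelling -/

def relabel (g : ℕ → ℕ) (Λ : Symb) : Symb := (Λ.1.image g, Λ.2.image g)

/-- `label Z (2 * m)` and `label Z' (2 * m' - 1)` are the bijections `h` and `h'`. -/
def label (X : Symb) (u x : ℕ) : ℕ := u - rank X x

lemma Interlaced.label_strictMonoOn {X : Symb} (hX : Interlaced X) {u : ℕ}
    (hu : X.1.card + X.2.card ≤ u + 1) : StrictMonoOn (label X u) ↑(X.1 ∪ X.2) := by
  intro x hx y hy hxy
  have := (hX.rank_lt_rank_iff hy hx).mpr hxy
  have := hX.rank_lt hx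
  simp only [label]
  omega

lemma Interlaced.ent_relabel_label_fst {X : Symb} (hX : Interlaced X) {u : ℕ}
    (hu : X.1.card + X.2.card ≤ u + 1) (i : ℕ) :
    ent (relabel (label X u) X).1 i = if i < X.1.card then some (u - 2 * i) else none := by
  rw [relabel, ent_image ((hX.label_strictMonoOn hu).mono (by simp))]
  split_ifs with hi
  · obtain ⟨x, hx⟩ := exists_ent_of_lt hi
    simp [hx, label, rank_of_ent_fst hx]
  · simp [ent_eq_none_iff.mpr (not_lt.mp hi)]

lemma Interlaced.ent_relabel_label_snd {X : Symb} (hX : Interlaced X) {u : ℕ}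
    (hu : X.1.card + X.2.card ≤ u + 1) (i : ℕ) :
    ent (relabel (label X u) X).2 i =
      if i < X.2.card then some (u - (2 * i + 1)) else none := by
  rw [relabel, ent_image ((hX.label_strictMonoOn hu).mono (by simp))]
  split_ifs with hi
  · obtain ⟨x, hx⟩ := exists_ent_of_lt hi
    simp [hx, label, hX.rank_of_ent_snd hx]
  · simp [ent_eq_none_iff.mpr (not_lt.mp hi)]

lemma Zreg1_eq_relabel {Z : Symb} {m : ℕ} (hZ : Interlaced Z) (h₁ : Z.1.card = m + 1)
    (h₂ : Z.2.card = m) : Zreg1 m = relabel (label Z (2 * m)) Z := by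
  refine Prod.ext (Finset.eq_of_forall_ent_eq fun i => ?_)
    (Finset.eq_of_forall_ent_eq fun i => ?_)
  · rw [hZ.ent_relabel_label_fst (by omega), Zreg1, ent_range_image fun a b h => by omega]
    split_ifs <;> (try simp only [Option.some.injEq]) <;> omega
  · rw [hZ.ent_relabel_label_snd (by omega), Zreg1, ent_range_image fun a b h => by omega]
    split_ifs <;> (try simp only [Option.some.injEq]) <;> omega

lemma Zreg0_eq_relabel {Z : Symb} {m : ℕ} (hZ : Interlaced Z) (h₁ : Z.1.card = m)
    (h₂ : Z.2.card = m) : Zreg0 m = relabel (label Z (2 * m - 1)) Z := by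
  refine Prod.ext (Finset.eq_of_forall_ent_eq fun i => ?_)
    (Finset.eq_of_forall_ent_eq fun i => ?_)
  · rw [hZ.ent_relabel_label_fst (by omega), Zreg0, ent_range_image fun a b h => by omega]
    split_ifs <;> (try simp only [Option.some.injEq]) <;> omega
  · rw [hZ.ent_relabel_label_snd (by omega), Zreg0, ent_range_image fun a b h => by omega]
    split_ifs <;> (try simp only [Option.some.injEq]) <;> omega

lemma oRel_ent_image_iff {r : ℕ → ℕ → Prop} {s t : Finset ℕ} {f g : ℕ → ℕ}
    (hf : StrictMonoOn f ↑s) (hg : StrictMonoOn g ↑t)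
    (h : ∀ x ∈ s, ∀ y ∈ t, r (f x) (g y) ↔ r x y) (i j : ℕ) :
    oRel r (ent (s.image f) i) (ent (t.image g) j) ↔ oRel r (ent s i) (ent t j) := by
  rw [ent_image hf, ent_image hg]
  rcases hx : ent s i with _ | x <;> rcases hy : ent t j with _ | y <;>
    simp [h x (ent_mem hx) y (ent_mem hy)]

lemma Bm_relabel_iff {Λ Λ' : Symb} {g g' : ℕ → ℕ} (hg : StrictMonoOn g ↑(Λ.1 ∪ Λ.2))
    (hg' : StrictMonoOn g' ↑(Λ'.1 ∪ Λ'.2))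
    (hcross : ∀ x ∈ Λ.1 ∪ Λ.2, ∀ y ∈ Λ'.1 ∪ Λ'.2, g' y < g x ↔ y < x) :
    Bm (relabel g Λ) (relabel g' Λ') ↔ Bm Λ Λ' := by
  have hg₁ : StrictMonoOn g ↑Λ.1 := hg.mono (by simp)
  have hg₂ : StrictMonoOn g ↑Λ.2 := hg.mono (by simp)
  have hg₁' : StrictMonoOn g' ↑Λ'.1 := hg'.mono (by simp)
  have hg₂' : StrictMonoOn g' ↑Λ'.2 := hg'.mono (by simp)
  have hge : ∀ x ∈ Λ.1 ∪ Λ.2, ∀ y ∈ Λ'.1 ∪ Λ'.2, g' y ≥ g x ↔ y ≥ x := fun x hx y hy => by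
    simpa only [not_lt] using (hcross x hx y hy).not
  simp only [Bm, relabel, Finset.card_image_of_injOn hg₁.injOn,
    Finset.card_image_of_injOn hg₂.injOn, Finset.card_image_of_injOn hg₁'.injOn,
    Finset.card_image_of_injOn hg₂'.injOn]
  refine and_congr .rfl (and_congr .rfl (and_congr ?_ (and_congr ?_ (and_congr ?_ ?_)))) <;>
    refine forall_congr' fun i => oRel_ent_image_iff (by assumption) (by assumption) ?_ _ _ <;>
    intro x hx y hy
  · exact hcross x (by simp [hx]) y (by simp [hy])
  · exact hge y (by simp [hy]) x (by simp [hx])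
  · exact hcross x (by simp [hx]) y (by simp [hy])
  · exact hge y (by simp [hy]) x (by simp [hx])

lemma Bm1_iff_Bm {Λ Λ' : Symb} : Bm1 Λ Λ' ↔ Bm Λ' Λ :=
  ⟨fun ⟨c₁, c₂, h₁, h₂, h₃, h₄⟩ => ⟨c₂.symm, c₁.symm, h₄, h₃, h₂, h₁⟩,
    fun ⟨c₁, c₂, h₁, h₂, h₃, h₄⟩ => ⟨c₂.symm, c₁.symm, h₄, h₃, h₂, h₁⟩⟩

lemma _root_.SubZI.fst_subset {M Z : Symb} (hM : SubZI M Z) : M.1 ⊆ Z.1 :=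
  hM.1.trans Finset.sdiff_subset

lemma _root_.SubZI.snd_subset {M Z : Symb} (hM : SubZI M Z) : M.2 ⊆ Z.2 :=
  hM.2.trans Finset.sdiff_subset

lemma subZI_of_subset {M R : Symb} (hR : Regular R) (h₁ : M.1 ⊆ R.1) (h₂ : M.2 ⊆ R.2) :
    SubZI M R :=
  ⟨fun _ hx => Finset.mem_sdiff.mpr ⟨h₁ hx, Finset.disjoint_left.mp hR (h₁ hx)⟩,
    fun _ hx => Finset.mem_sdiff.mpr ⟨h₂ hx, Finset.disjoint_right.mp hR (h₂ hx)⟩⟩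

lemma _root_.Regular.relabel {Z : Symb} {g : ℕ → ℕ} (hZ : Regular Z)
    (hg : Set.InjOn g ↑(Z.1 ∪ Z.2)) : Regular (relabel g Z) := by
  refine Finset.disjoint_left.mpr fun y hy₁ hy₂ => ?_
  obtain ⟨a, ha, rfl⟩ := Finset.mem_image.mp hy₁
  obtain ⟨b, hb, hba⟩ := Finset.mem_image.mp hy₂
  have hab : b = a := hg (by simp [hb]) (by simp [ha]) hba
  exact Finset.disjoint_left.mp hZ ha (hab ▸ hb)

lemma union_lam {Z M : Symb} (hM₁ : M.1 ⊆ Z.1) (hM₂ : M.2 ⊆ Z.2) :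
    (lam Z M).1 ∪ (lam Z M).2 = Z.1 ∪ Z.2 := by
  ext x
  have := @hM₁ x
  have := @hM₂ x
  simp only [lam, Finset.mem_union, Finset.mem_sdiff]
  tauto

lemma lam_relabel {Z M : Symb} {g : ℕ → ℕ} (hg : Set.InjOn g ↑(Z.1 ∪ Z.2))
    (hM₁ : M.1 ⊆ Z.1) (hM₂ : M.2 ⊆ Z.2) :
    lam (relabel g Z) (relabel g M) = relabel g (lam Z M) := by
  simp only [lam, relabel, Finset.image_union,
    Finset.image_sdiff_of_injOn (hg.mono (by simp)) hM₁,
    Finset.image_sdiff_of_injOn (hg.mono (by simp)) hM₂]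

lemma posImage_image {s u : Finset ℕ} {g : ℕ → ℕ} (hg : StrictMonoOn g ↑s) (hu : u ⊆ s) :
    posImage s (s.image g) u 0 = u.image g := by
  ext y
  simp only [posImage, Finset.mem_filter, Finset.mem_image, Nat.add_zero, ent_image hg]
  constructor
  · rintro ⟨-, i, x, hx, hxu, hy⟩
    rw [hx] at hy
    exact ⟨x, hxu, Option.some_injective _ hy⟩
  · rintro ⟨x, hxu, rfl⟩
    obtain ⟨i, hi⟩ := mem_iff_exists_ent.mp (hu hxu)
    exact ⟨⟨x, hu hxu, rfl⟩, i, x, hi, hxu, by rw [hi]; rfl⟩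

lemma posImage_relabel {Z M : Symb} {g : ℕ → ℕ} (hg : StrictMonoOn g ↑(Z.1 ∪ Z.2))
    (hM : SubZI M Z) :
    (posImage Z.1 (relabel g Z).1 M.1 0, posImage Z.2 (relabel g Z).2 M.2 0) = relabel g M :=
  Prod.ext (posImage_image (hg.mono (by simp)) hM.fst_subset)
    (posImage_image (hg.mono (by simp)) hM.snd_subset)

lemma bbarPlus_lam_iff {Z Z' M N : Symb} {m m' : ℕ} (hM : SubZI M Z) (hN : SubZI N Z') :
    BbarPlus Z Z' m m' (lam Z M) (lam Z' N) ↔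
      (m' = m ∧ Bm (lam Z M) (lam Z' N)) ∨ (m' = m + 1 ∧ Bm (lam Z' N) (lam Z M)) := by
  rw [BbarPlus, Bm1_iff_Bm]
  exact ⟨fun h => h.2.2, fun h => ⟨⟨M, hM, rfl⟩, ⟨N, hN, rfl⟩, h⟩⟩

lemma bbarPlus_relabel_iff {Z Z' M N : Symb} {m m' : ℕ} {g g' : ℕ → ℕ}
    (hg : StrictMonoOn g ↑(Z.1 ∪ Z.2)) (hg' : StrictMonoOn g' ↑(Z'.1 ∪ Z'.2))
    (hZ : Regular Z) (hZ' : Regular Z')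
    (hcross : ∀ x ∈ Z.1 ∪ Z.2, ∀ y ∈ Z'.1 ∪ Z'.2,
      (m' = m → (g' y < g x ↔ y < x)) ∧ (m' = m + 1 → (g x < g' y ↔ x < y)))
    (hM : SubZI M Z) (hN : SubZI N Z') :
    BbarPlus (relabel g Z) (relabel g' Z') m m'
        (lam (relabel g Z) (relabel g M)) (lam (relabel g' Z') (relabel g' N)) ↔
      BbarPlus Z Z' m m' (lam Z M) (lam Z' N) := by
  have hL := union_lam hM.fst_subset hM.snd_subset
  have hL' := union_lam hN.fst_subset hN.snd_subset
  rw [bbarPlus_lam_iff hM hN,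
    bbarPlus_lam_iff (subZI_of_subset (hZ.relabel hg.injOn)
      (Finset.image_subset_image hM.fst_subset) (Finset.image_subset_image hM.snd_subset))
      (subZI_of_subset (hZ'.relabel hg'.injOn)
      (Finset.image_subset_image hN.fst_subset) (Finset.image_subset_image hN.snd_subset)),
    lam_relabel hg.injOn hM.fst_subset hM.snd_subset,
    lam_relabel hg'.injOn hN.fst_subset hN.snd_subset]
  refine or_congr (and_congr_right fun h => Bm_relabel_iff (hL ▸ hg) (hL' ▸ hg') ?_)
    (and_congr_right fun h => Bm_relabel_iff (hL' ▸ hg') (hL ▸ hg) ?_)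
  · intro x hx y hy
    exact (hcross x (hL ▸ hx) y (hL' ▸ hy)).1 h
  · intro y hy x hx
    exact (hcross x (hL ▸ hx) y (hL' ▸ hy)).2 h

/-! ### Uniqueness forces domination -/

def Dominates (X Y : Symb) : Prop :=
  ∀ i, oRel (· > ·) (ent X.1 i) (ent Y.1 i) ∧ oRel (· > ·) (ent X.2 i) (ent Y.2 i)

structure UniqueBm (X Y : Symb) : Prop where
  bm : Bm X Y
  eq_left : ∀ W ∈ Sbar X, W.1.card = X.1.card → W.2.card = X.2.card → Bm W Y → W = X
  eq_right : ∀ W ∈ Sbar Y, W.1.card = Y.1.card → W.2.card = Y.2.card → Bm X W → W = Y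

lemma mem_Sbar_self (Z : Symb) : Z ∈ Sbar Z :=
  ⟨(∅, ∅), ⟨by simp, by simp⟩, by simp [lam]⟩

lemma _root_.OneToOne.uniqueBm_self {Z Z' : Symb} {m : ℕ} (h : OneToOne Z Z' m m) :
    UniqueBm Z Z' := by
  obtain ⟨-, hL, hR⟩ := h
  obtain ⟨⟨-, -, hB⟩, c₁, c₂, c₁', c₂'⟩ : DRel Z Z' m m Z Z' := (Set.ext_iff.mp hL Z').mpr rfl
  replace hB : Bm Z Z' := by
    rcases hB with ⟨-, hB⟩ | ⟨h, -⟩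
    · exact hB
    · omega
  refine ⟨hB, fun W hW h₁ h₂ hBW => ?_, fun W hW h₁ h₂ hBW => ?_⟩
  · exact (Set.ext_iff.mp hR W).mp
      ⟨⟨hW, mem_Sbar_self Z', .inl ⟨rfl, hBW⟩⟩, by omega, by omega, c₁', c₂'⟩
  · exact (Set.ext_iff.mp hL W).mp
      ⟨⟨mem_Sbar_self Z, hW, .inl ⟨rfl, hBW⟩⟩, c₁, c₂, by omega, by omega⟩

lemma _root_.OneToOne.uniqueBm_succ {Z Z' : Symb} {m : ℕ} (h : OneToOne Z Z' m (m + 1)) :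
    UniqueBm Z' Z := by
  obtain ⟨-, hL, hR⟩ := h
  obtain ⟨⟨-, -, hB⟩, c₁, c₂, c₁', c₂'⟩ : DRel Z Z' m (m + 1) Z Z' :=
    (Set.ext_iff.mp hL Z').mpr rfl
  replace hB : Bm Z' Z := by
    rcases hB with ⟨h, -⟩ | ⟨-, hB⟩
    · omega
    · exact Bm1_iff_Bm.mp hB
  refine ⟨hB, fun W hW h₁ h₂ hBW => ?_, fun W hW h₁ h₂ hBW => ?_⟩
  · exact (Set.ext_iff.mp hL W).mp
      ⟨⟨mem_Sbar_self Z, hW, .inr ⟨rfl, Bm1_iff_Bm.mpr hBW⟩⟩, c₁, c₂, by omega, by omega⟩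
  · exact (Set.ext_iff.mp hR W).mp
      ⟨⟨hW, mem_Sbar_self Z', .inr ⟨rfl, Bm1_iff_Bm.mpr hBW⟩⟩, by omega, by omega, c₁', c₂'⟩

lemma UniqueBm.not_Bm_lam_swap_left {X Y : Symb} (hU : UniqueBm X Y) {x y : ℕ}
    (hd : Disjoint X.1 X.2) (hx : x ∈ X.1) (hy : y ∈ X.2) : ¬ Bm (lam X ({x}, {y})) Y :=
  fun h => by
    have hsub : SubZI ({x}, {y}) X := subZI_of_subset hd (by simpa) (by simpa)
    have hW := hU.eq_left _ ⟨_, hsub, rfl⟩ (card_lam_swap hd hx hy).1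
      (card_lam_swap hd hx hy).2 h
    have hy' : y ∈ (lam X ({x}, {y})).1 := by simp [lam]
    rw [hW] at hy'
    exact Finset.disjoint_left.mp hd hy' hy

lemma UniqueBm.not_Bm_lam_swap_right {X Y : Symb} (hU : UniqueBm X Y) {x y : ℕ}
    (hd : Disjoint Y.1 Y.2) (hx : x ∈ Y.1) (hy : y ∈ Y.2) : ¬ Bm X (lam Y ({x}, {y})) :=
  fun h => by
    have hsub : SubZI ({x}, {y}) Y := subZI_of_subset hd (by simpa) (by simpa)
    have hW := hU.eq_right _ ⟨_, hsub, rfl⟩ (card_lam_swap hd hx hy).1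
      (card_lam_swap hd hx hy).2 h
    have hy' : y ∈ (lam Y ({x}, {y})).1 := by simp [lam]
    rw [hW] at hy'
    exact Finset.disjoint_left.mp hd hy' hy

lemma Bm_lam_swap_right {X Y : Symb} (hY : Interlaced Y) (hB : Bm X Y) {i c d : ℕ}
    (hc : ent Y.1 i = some c) (hd : ent Y.2 i = some d)
    (hac : oRel (· > ·) (ent X.1 i) (some c)) (hdb : oRel (· ≥ ·) (some d) (ent X.2 i)) :
    Bm X (lam Y ({c}, {d})) := by
  obtain ⟨c₁, c₂, h₁, h₂, h₃, h₄⟩ := hB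
  obtain ⟨hW₁, hW₂⟩ := hY.ent_lam_swap hc hd (.inl rfl)
  obtain ⟨k₁, k₂⟩ := card_lam_swap hY.disjoint (ent_mem hc) (ent_mem hd)
  have hdc : oRel (· > ·) (some c) (some d) := by simpa [hc, hd] using hY.fst_gt_snd i
  refine ⟨k₁.trans c₁, k₂ ▸ c₂, fun j => ?_, fun j => ?_, fun j => ?_, fun j => ?_⟩ <;>
    simp only [hW₁, hW₂, Function.update_apply]
  · split_ifs with hj
    · exact hj ▸ hac
    · exact h₁ j
  · split_ifs with hj
    · subst hj
      exact oRel_trans_some (fun _ _ _ h h' => by omega) hdc (hd ▸ h₂ j)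
    · exact h₂ j
  · split_ifs with hj
    · have h := h₃ j
      rw [hj, hc] at h
      exact oRel_trans_some (fun _ _ _ h h' => by omega) h hdc
    · exact h₃ j
  · split_ifs with hj
    · exact hj ▸ hdb
    · exact h₄ j

lemma Bm_lam_swap_left {X Y : Symb} (hX : Interlaced X) (hB : Bm X Y) {i a b : ℕ}
    (ha : ent X.1 i = some a) (hb : ent X.2 i = some b)
    (hca : oRel (· ≥ ·) (ent Y.1 i) (some a)) (hbd : oRel (· > ·) (some b) (ent Y.2 i)) :
    Bm (lam X ({a}, {b})) Y := by
  obtain ⟨c₁, c₂, h₁, h₂, h₃, h₄⟩ := hB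
  obtain ⟨hW₁, hW₂⟩ := hX.ent_lam_swap ha hb (.inl rfl)
  obtain ⟨k₁, k₂⟩ := card_lam_swap hX.disjoint (ent_mem ha) (ent_mem hb)
  have hab : oRel (· > ·) (some a) (some b) := by simpa [ha, hb] using hX.fst_gt_snd i
  refine ⟨k₂ ▸ c₁, k₁ ▸ c₂, fun j => ?_, fun j => ?_, fun j => ?_, fun j => ?_⟩ <;>
    simp only [hW₁, hW₂, Function.update_apply]
  · split_ifs with hj
    · exact hj ▸ hbd
    · exact h₁ j
  · split_ifs with hj
    · have h := h₂ j
      rw [hj, ha] at h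
      exact oRel_trans_some (fun _ _ _ h h' => by omega) h hab
    · exact h₂ j
  · split_ifs with hj
    · subst hj
      exact oRel_trans_some (fun _ _ _ h h' => by omega) hab (hb ▸ h₃ j)
    · exact h₃ j
  · split_ifs with hj
    · exact hj ▸ hca
    · exact h₄ j

lemma Bm_lam_swap_left_succ {X Y : Symb} (hX : Interlaced X) (hY : Interlaced Y)
    (hB : Bm X Y) {i a b : ℕ} (ha : ent X.1 (i + 1) = some a) (hb : ent X.2 i = some b)
    (hca : oRel (· ≥ ·) (ent Y.1 i) (some a)) (hdb : oRel (· ≥ ·) (ent Y.2 i) (some b))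
    (hnext : oRel (· > ·) (some a) (ent Y.1 (i + 1))) :
    Bm (lam X ({a}, {b})) Y := by
  obtain ⟨c₁, c₂, h₁, h₂, h₃, h₄⟩ := hB
  obtain ⟨hW₁, hW₂⟩ := hX.ent_lam_swap ha hb (.inr rfl)
  obtain ⟨k₁, k₂⟩ := card_lam_swap hX.disjoint (ent_mem ha) (ent_mem hb)
  refine ⟨k₂ ▸ c₁, k₁ ▸ c₂, fun j => ?_, fun j => ?_, fun j => ?_, fun j => ?_⟩ <;>
    simp only [hW₁, hW₂, Function.update_apply]
  · split_ifs with hj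
    · subst hj
      exact oRel_trans (fun _ _ _ h h' => by omega) (hb ▸ h₃ i) (hY.fst_gt_snd (i + 1))
        fun _ _ _ he => hY.exists_ent_fst he
    · exact h₁ j
  · split_ifs with hj
    · obtain rfl : j = i := by omega
      exact hdb
    · exact h₂ j
  · split_ifs with hj
    · exact hj ▸ hnext
    · exact h₃ j
  · split_ifs with hj
    · exact hj ▸ hca
    · exact h₄ j

/-- If domination fails at `i`, exchanging two entries of `X` or of `Y` adjacent in their merged
sequence produces a second partner. -/
lemma UniqueBm.dominates_step {X Y : Symb} (hU : UniqueBm X Y) (hX : Interlaced X)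
    (hY : Interlaced Y) {i : ℕ} (hnext : oRel (· > ·) (ent X.1 (i + 1)) (ent Y.1 (i + 1))) :
    oRel (· > ·) (ent X.1 i) (ent Y.1 i) ∧ oRel (· > ·) (ent X.2 i) (ent Y.2 i) := by
  have hB := hU.bm
  rcases hb : ent X.2 i with _ | b
  · have hc : ent Y.1 i = none := ent_eq_none_iff.mpr (hB.1 ▸ ent_eq_none_iff.mp hb)
    simp [hc]
  obtain ⟨a, ha⟩ := hX.exists_ent_fst hb
  obtain ⟨c, hc⟩ := exists_ent_of_lt (s := Y.1) (hB.1 ▸ ent_lt_card hb)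
  rw [ha, hc]
  by_cases hbd : oRel (· > ·) (some b) (ent Y.2 i)
  · refine ⟨not_le.mp fun hac => ?_, hbd⟩
    exact hU.not_Bm_lam_swap_left hX.disjoint (ent_mem ha) (ent_mem hb)
      (Bm_lam_swap_left hX hB ha hb (by rw [hc]; exact hac) hbd)
  · exfalso
    obtain ⟨d, hd, hdb⟩ : ∃ d, ent Y.2 i = some d ∧ b ≤ d := by
      rcases hd : ent Y.2 i with _ | d
      · simp [hd] at hbd
      · exact ⟨d, rfl, by simpa [hd] using hbd⟩
    rcases lt_or_ge c a with hca | hac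
    · exact hU.not_Bm_lam_swap_right hY.disjoint (ent_mem hc) (ent_mem hd)
        (Bm_lam_swap_right hY hB hc hd (by rw [ha]; exact hca) (by rw [hb]; exact hdb))
    · obtain ⟨a', ha'⟩ := exists_ent_of_lt (s := X.1) (i := i + 1)
        (by have := ent_lt_card hd; have := hB.2.1; omega)
      have ha'a : a' < a := ent_lt_ent (Nat.lt_succ_self i) ha ha'
      exact hU.not_Bm_lam_swap_left hX.disjoint (ent_mem ha') (ent_mem hb)
        (Bm_lam_swap_left_succ hX hY hB ha' hb (by rw [hc]; exact (ha'a.trans_le hac).le)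
          (by rw [hd]; exact hdb) (by rw [← ha']; exact hnext))

theorem UniqueBm.dominates {X Y : Symb} (hU : UniqueBm X Y) (hX : Interlaced X)
    (hY : Interlaced Y) : Dominates X Y := by
  have hfst : ∀ k i, X.1.card ≤ i + k → oRel (· > ·) (ent X.1 i) (ent Y.1 i) := by
    intro k
    induction k with
    | zero => intro i hi; simp [ent_eq_none_iff.mpr (show X.1.card ≤ i by omega)]
    | succ k ih => intro i hi; exact (hU.dominates_step hX hY (ih (i + 1) (by omega))).1
  exact fun i => hU.dominates_step hX hY (hfst _ (i + 1) le_add_self)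

/-- Under domination the entries of `X` and `Y` merge into
`x1_0 > y1_0 ≥ x2_0 > y2_0 ≥ x1_1 > ⋯`. -/
lemma Dominates.lt_iff_rank_le {X Y : Symb} (hdom : Dominates X Y) (hX : Interlaced X)
    (hY : Interlaced Y) (hB : Bm X Y) {x y : ℕ} (hx : x ∈ X.1 ∪ X.2) (hy : y ∈ Y.1 ∪ Y.2) :
    y < x ↔ rank X x ≤ rank Y y := by
  obtain ⟨-, -, h₁, h₂, h₃, h₄⟩ := hB
  obtain ⟨p, ⟨hp, hrx⟩ | ⟨hp, hrx⟩⟩ := hX.exists_ent_rank hx <;>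
    obtain ⟨q, ⟨hq, hry⟩ | ⟨hq, hry⟩⟩ := hY.exists_ent_rank hy <;> rw [hrx, hry]
  · have h₄' (i : ℕ) : oRel (· ≥ ·) (ent Y.1 i) (ent X.1 (i + 1)) :=
      oRel_trans (fun _ _ _ h h' => by omega) (h₄ i) (hX.snd_gt_fst i)
        fun _ _ _ hc => hX.exists_ent_snd hc
    rw [lt_iff_le_of_interleave (fun i => (hdom i).1) h₄' hp hq]
    omega
  · rw [lt_iff_le_of_interleave h₁ h₂ hp hq]
    omega
  · rw [← not_le, le_iff_le_of_interleave h₄ h₃ hq hp]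
    omega
  · have h₂' (i : ℕ) : oRel (· ≥ ·) (ent Y.2 i) (ent X.2 (i + 1)) :=
      oRel_trans (fun _ _ _ h h' => by omega) (h₂ i) (hX.fst_gt_snd (i + 1))
        fun _ _ _ hc => hX.exists_ent_fst hc
    rw [lt_iff_le_of_interleave (fun i => (hdom i).2) h₂' hp hq]
    omega

end Symb

open Symb in
theorem stmt15 (m m' : ℕ) (Z Z' : Symb) (hm : m' = m ∨ m' = m + 1)
    (hZ : IsSpecial1 Z m) (hZ' : IsSpecial0 Z' m')
    (hregZ : Regular Z) (hregZ' : Regular Z') (h11 : OneToOne Z Z' m m') :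
    ∀ M : Symb, SubZI M Z → ∀ N : Symb, SubZI N Z' →
      (BbarPlus Z Z' m m' (lam Z M) (lam Z' N) ↔
       BbarPlus (Zreg1 m) (Zreg0 m') m m'
         (lam (Zreg1 m) (posImage Z.1 (Zreg1 m).1 M.1 0, posImage Z.2 (Zreg1 m).2 M.2 0))
         (lam (Zreg0 m') (posImage Z'.1 (Zreg0 m').1 N.1 0, posImage Z'.2 (Zreg0 m').2 N.2 0))) := by
  intro M hM N hN
  have hX := hZ.interlaced hregZ
  have hY := hZ'.interlaced hregZ'
  obtain ⟨hZ₁, hZ₂, -⟩ := hZ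
  obtain ⟨hZ'₁, hZ'₂, -⟩ := hZ'
  have hg := hX.label_strictMonoOn (u := 2 * m) (by omega)
  have hg' := hY.label_strictMonoOn (u := 2 * m' - 1) (by omega)
  rw [Zreg1_eq_relabel hX hZ₁ hZ₂, Zreg0_eq_relabel hY hZ'₁ hZ'₂, posImage_relabel hg hM,
    posImage_relabel hg' hN, bbarPlus_relabel_iff hg hg' hregZ hregZ' ?_ hM hN]
  intro x hx y hy
  have := hX.rank_lt hx
  have := hY.rank_lt hy
  simp only [label]
  rcases hm with rfl | rfl
  · have hU := h11.uniqueBm_self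
    rw [(hU.dominates hX hY).lt_iff_rank_le hX hY hU.bm hx hy]
    exact ⟨fun _ => by omega, by omega⟩
  · have hU := h11.uniqueBm_succ
    rw [(hU.dominates hY hX).lt_iff_rank_le hY hX hU.bm hy hx]
    exact ⟨by omega, fun _ => by omega⟩
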